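/- arXiv:1808.06922 — 7 statements merged into one kernel-verified Lean document; each statement's English description precedes it below -/
import Mathlib

section
/- In a Best-of-3 game played under the Catch-Up Rule (loser of a point serves next), where A serves first, the probability that A wins is p(1-q) + p^2 q + (1-p)p(1-q) = 2p - p^2 - 2pq + 2p^2 q; in particular it equals the probability that A wins under the Standard Rule. -/
/-! Expanding the game tree, A wins under the Catch-Up Rule along the paths WW, WLW, LWW with
probabilities `p(1-q)`, `pqp`, `(1-p)p(1-q)`, and under the Standard Rule with probabilities
`p²`, `p(1-p)(1-q)`, `(1-p)(1-q)p`; both sums equal `2p - p² - 2pq + 2p²q`. -/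

/-- Win probability for player `A` in a service game played to `goal` points.
`next prevSrv aWon` gives the next server (`true` = A serves). `srv = true` means
A serves the current point; A wins on his serve with probability `p`, B wins on her
serve with probability `q`. `fuel` bounds the number of points played. -/
def winProb (p q : ℝ) (goal : ℕ) (next : Bool → Bool → Bool) :
    ℕ → ℕ → ℕ → Bool → ℝ
  | 0, _, _, _ => 0
  | fuel + 1, x, y, srv =>
    if goal ≤ x then 1
    else if goal ≤ y then 0
    else
      (if srv then p else 1 - q) * winProb p q goal next fuel (x + 1) y (next srv true) +
        (1 - if srv then p else 1 - q) * winProb p q goal next fuel x (y + 1) (next srv false)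

/-- Standard Rule: the winner of the point serves next. -/
def nextSR : Bool → Bool → Bool := fun _ aWon => aWon

/-- Catch-Up Rule: the loser of the point serves next. -/
def nextCR : Bool → Bool → Bool := fun _ aWon => !aWon

section

variable (p q : ℝ) (next : Bool → Bool → Bool) {goal : ℕ} (fuel : ℕ) {x y : ℕ} (srv : Bool)

theorem winProb_of_goal_le_left (hx : goal ≤ x) :
    winProb p q goal next (fuel + 1) x y srv = 1 := by
  simp [winProb, hx]

theorem winProb_of_goal_le_right (hx : x < goal) (hy : goal ≤ y) :
    winProb p q goal next (fuel + 1) x y srv = 0 := by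
  simp [winProb, hy, hx.not_ge]

theorem winProb_succ_of_lt (hx : x < goal) (hy : y < goal) :
    winProb p q goal next (fuel + 1) x y srv =
      (if srv then p else 1 - q) * winProb p q goal next fuel (x + 1) y (next srv true) +
        (1 - if srv then p else 1 - q) * winProb p q goal next fuel x (y + 1) (next srv false) := by
  simp [winProb, hx.not_ge, hy.not_ge]

end

theorem winProb_bestOf3_catchUp (p q : ℝ) :
    winProb p q 2 nextCR 4 0 0 true = p * (1 - q) + p ^ 2 * q + (1 - p) * p * (1 - q) := by
  norm_num [winProb_succ_of_lt, winProb_of_goal_le_left, winProb_of_goal_le_right, nextCR]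
  ring

theorem winProb_bestOf3_standard (p q : ℝ) :
    winProb p q 2 nextSR 4 0 0 true = p ^ 2 + 2 * p * (1 - p) * (1 - q) := by
  norm_num [winProb_succ_of_lt, winProb_of_goal_le_left, winProb_of_goal_le_right, nextSR]
  ring

theorem bestOf3_CR_winProb_general (p q : ℝ) :
    winProb p q 2 nextCR 4 0 0 true
        = p * (1 - q) + p ^ 2 * q + (1 - p) * p * (1 - q) ∧
      winProb p q 2 nextCR 4 0 0 true
        = 2 * p - p ^ 2 - 2 * p * q + 2 * p ^ 2 * q ∧
      winProb p q 2 nextCR 4 0 0 true = winProb p q 2 nextSR 4 0 0 true := by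
  refine ⟨winProb_bestOf3_catchUp p q, ?_, ?_⟩
  · rw [winProb_bestOf3_catchUp]
    ring
  · rw [winProb_bestOf3_catchUp, winProb_bestOf3_standard]
    ring

/-- In a Best-of-3 game under the Catch-Up Rule with A serving first, the probability
that A wins is `p(1-q) + p²q + (1-p)p(1-q) = 2p - p² - 2pq + 2p²q`, which equals the
probability that A wins under the Standard Rule. -/
theorem bestOf3_CR_winProb (p q : ℝ) (hp0 : 0 < p) (hp1 : p < 1)
    (hq0 : 0 < q) (hq1 : q < 1) :
    winProb p q 2 nextCR 4 0 0 true
        = p * (1 - q) + p ^ 2 * q + (1 - p) * p * (1 - q) ∧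
      winProb p q 2 nextCR 4 0 0 true
        = 2 * p - p ^ 2 - 2 * p * q + 2 * p ^ 2 * q ∧
      winProb p q 2 nextCR 4 0 0 true = winProb p q 2 nextSR 4 0 0 true :=
  bestOf3_CR_winProb_general p q
end

section
/- In a Best-of-(2k+1) game, for every fixed serving schedule (the outcomes of A's first k+1 serves and B's first k serves), the winner under the Standard Rule is A if and only if b \geq a, where a is the number of losses among A's k+1 serves and b is the number of losses among B's k serves. -/
/-!
Under the Standard Rule the serve changes hands exactly when the server loses a point. Hence,
once A has used `i` serves and B has used `j`, A is serving iff both have lost equally many of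
them, and the score is then `i : j`; otherwise A has lost one more and the score is
`i - 1 : j + 1`. So A can only reach `k + 1` points as server, having used all his `k + 1` serves
and lost no more of them than B has of her first `j ≤ k`; and B can only reach `k + 1` points as
server, having used all her `k` serves and lost fewer of them than A has of his first `i ≤ k + 1`.
-/

/-- Deterministic playout of a service game to `goal` points with a fixed serving
schedule.  `As i = true` means A wins his `i`-th serve (0-indexed); `Bs j = true`
means B wins her `j`-th serve.  `next prevSrv aWon` gives the next server
(`true` = A serves).  `i, j` count serves already used by A and B, `x, y` are the
scores, `srv` is the current server; returns `true` iff A wins the game.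
`fuel` bounds the number of points played. -/
def playWinner (goal : ℕ) (next : Bool → Bool → Bool) (As Bs : ℕ → Bool) :
    ℕ → ℕ → ℕ → ℕ → ℕ → Bool → Bool
  | 0, _, _, x, y, _ => decide (y < x)
  | fuel + 1, i, j, x, y, srv =>
    if goal ≤ x then true
    else if goal ≤ y then false
    else if srv then
      let aWon := As i
      playWinner goal next As Bs fuel (i + 1) j (if aWon then x + 1 else x)
        (if aWon then y else y + 1) (next srv aWon)
    else
      let aWon := !Bs j
      playWinner goal next As Bs fuel i (j + 1) (if aWon then x + 1 else x)
        (if aWon then y else y + 1) (next srv aWon)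

def lossCount (f : ℕ → Bool) (n : ℕ) : ℕ :=
  ((Finset.range n).filter (fun i => f i = false)).card

lemma lossCount_mono (f : ℕ → Bool) {m n : ℕ} (h : m ≤ n) : lossCount f m ≤ lossCount f n :=
  Finset.card_le_card (Finset.filter_subset_filter _ (Finset.range_subset_range.2 h))

lemma lossCount_succ_of_true (f : ℕ → Bool) {n : ℕ} (h : f n = true) :
    lossCount f (n + 1) = lossCount f n := by
  rw [lossCount, Finset.range_add_one, Finset.filter_insert, if_neg (by simp [h])]
  rfl

lemma lossCount_succ_of_false (f : ℕ → Bool) {n : ℕ} (h : f n = false) :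
    lossCount f (n + 1) = lossCount f n + 1 := by
  rw [lossCount, Finset.range_add_one, Finset.filter_insert, if_pos h,
    Finset.card_insert_of_notMem (by simp)]
  rfl

/-- Invariant of Standard-Rule play started at `0 : 0` with A serving, in the arguments
`i j x y srv` of `playWinner`. -/
def IsSRState (As Bs : ℕ → Bool) (i j x y : ℕ) : Bool → Prop
  | true => x = i ∧ y = j ∧ lossCount As i = lossCount Bs j
  | false => x + 1 = i ∧ y = j + 1 ∧ lossCount As i = lossCount Bs j + 1

namespace IsSRState

variable {As Bs : ℕ → Bool} {i j x y k : ℕ} {srv : Bool}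

lemma add_eq (h : IsSRState As Bs i j x y srv) : x + y = i + j := by
  cases srv <;> (obtain ⟨_, _, _⟩ := h; omega)

lemma serve_A (h : IsSRState As Bs i j x y true) :
    IsSRState As Bs (i + 1) j (if As i then x + 1 else x) (if As i then y else y + 1)
      (nextSR true (As i)) := by
  obtain ⟨rfl, rfl, h⟩ := h
  cases hA : As x
  · exact ⟨rfl, rfl, by rw [lossCount_succ_of_false As hA, h]⟩
  · exact ⟨rfl, rfl, by rw [lossCount_succ_of_true As hA, h]⟩

lemma serve_B (h : IsSRState As Bs i j x y false) :
    IsSRState As Bs i (j + 1) (if !Bs j then x + 1 else x) (if !Bs j then y else y + 1)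
      (nextSR false (!Bs j)) := by
  obtain ⟨rfl, rfl, h⟩ := h
  cases hB : Bs j
  · exact ⟨rfl, rfl, by rw [lossCount_succ_of_false Bs hB, h]⟩
  · exact ⟨rfl, rfl, by rw [lossCount_succ_of_true Bs hB, h]⟩

lemma lossCount_le_of_goal_le_left (h : IsSRState As Bs i j x y srv) (hi : i ≤ k + 1)
    (hj : j ≤ k) (hx : k + 1 ≤ x) : lossCount As (k + 1) ≤ lossCount Bs k := by
  cases srv
  · obtain ⟨_, _, _⟩ := h
    omega
  · obtain ⟨rfl, rfl, h⟩ := h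
    obtain rfl : x = k + 1 := by omega
    exact h ▸ lossCount_mono Bs hj

lemma lossCount_lt_of_goal_le_right (h : IsSRState As Bs i j x y srv) (hi : i ≤ k + 1)
    (hj : j ≤ k) (hy : k + 1 ≤ y) : lossCount Bs k < lossCount As (k + 1) := by
  cases srv
  · obtain ⟨_, rfl, h⟩ := h
    obtain rfl : j = k := by omega
    exact Nat.lt_of_lt_of_le (h ▸ Nat.lt_succ_self _) (lossCount_mono As hi)
  · obtain ⟨_, _, _⟩ := h
    omega

end IsSRState

theorem playWinner_nextSR_iff (As Bs : ℕ → Bool) (k fuel : ℕ) {i j x y : ℕ} {srv : Bool}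
    (h : IsSRState As Bs i j x y srv) (hi : i ≤ k + 1) (hj : j ≤ k)
    (hfuel : 2 * k + 1 ≤ fuel + i + j) :
    playWinner (k + 1) nextSR As Bs fuel i j x y srv = true ↔
      lossCount As (k + 1) ≤ lossCount Bs k := by
  induction fuel generalizing i j x y srv with
  | zero =>
    have hxy := h.add_eq
    by_cases hx : k + 1 ≤ x
    · simpa [playWinner, show y < x by omega] using h.lossCount_le_of_goal_le_left hi hj hx
    · simpa [playWinner, show ¬ y < x by omega] using
        h.lossCount_lt_of_goal_le_right hi hj (by omega)
  | succ fuel ih =>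
    rw [playWinner]
    split_ifs with hx hy hsrv
    · simpa using h.lossCount_le_of_goal_le_left hi hj hx
    · simpa using h.lossCount_lt_of_goal_le_right hi hj hy
    · subst hsrv
      have ⟨hxi, _, _⟩ := h
      exact ih h.serve_A (by omega) hj (by omega)
    · obtain rfl : srv = false := by simpa using hsrv
      have ⟨_, hyj, _⟩ := h
      exact ih h.serve_B hi (by omega) (by omega)

/-- In a Best-of-(2k+1) game, for every fixed serving schedule, the winner under the
Standard Rule (A serving first) is A if and only if `a ≤ b`, where `a` is the number
of losses among A's first `k+1` serves and `b` the number of losses among B's first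
`k` serves. -/
theorem SR_winner_iff (k : ℕ) (As Bs : ℕ → Bool) :
    (playWinner (k + 1) nextSR As Bs (2 * k + 2) 0 0 0 0 true = true)
      ↔ ((Finset.range (k + 1)).filter (fun i => As i = false)).card
          ≤ ((Finset.range k).filter (fun j => Bs j = false)).card :=
  playWinner_nextSR_iff As Bs k (2 * k + 2) ⟨rfl, rfl, rfl⟩ (by omega) (Nat.zero_le k) (by omega)
end

section
/- In a Best-of-(2k+1) game, for every fixed serving schedule, the winner under the Catch-Up Rule is A if and only if b \geq a, where a is the number of losses among A's k+1 serves and b is the number of losses among B's k serves. Consequently, SR and CR always produce the same winner on any serving schedule. -/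
/-! Let `a_i` and `b_j` be the numbers of server losses among the first `i` serves of A and
the first `j` serves of B. After A has served `i` times and B `j` times, A's score `x` and
B's score `y` satisfy `x + a_i = i + b_j` and `y + b_j = a_i + j`.
Under the Catch-Up Rule B serves exactly after the points A wins, so B's serves (counting a
current one) number `x`; under the Standard Rule they number `y`. In both cases A never needs
more than `k + 1` serves and B never more than `k`. When A reaches `k + 1` points, comparing the
serves actually used with the full schedule gives `a_{k+1} ≤ b_k`; when B does, `a_{k+1} > b_k`. -/

def losses (s : ℕ → Bool) (n : ℕ) : ℕ := Nat.count (fun i => s i = false) n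

lemma losses_succ (s : ℕ → Bool) (n : ℕ) :
    losses s (n + 1) = losses s n + if s n then 0 else 1 := by
  cases h : s n <;> simp [losses, Nat.count_succ, h]

lemma losses_mono (s : ℕ → Bool) : Monotone (losses s) := Nat.count_monotone _

lemma losses_le_losses_add (s : ℕ → Bool) {m n : ℕ} (h : m ≤ n) :
    losses s n ≤ losses s m + (n - m) := by
  obtain ⟨d, rfl⟩ := Nat.exists_eq_add_of_le h
  simp only [losses, Nat.count_add, Nat.add_sub_cancel_left]
  exact Nat.add_le_add_left (Nat.count_le _) _

/-- Since `x + y < 2 * goal ≤ fuel + x + y`, the fuel never runs out before a player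
reaches `goal`. -/
theorem playWinner_eq_of_invariant {goal : ℕ} {next : Bool → Bool → Bool} {As Bs : ℕ → Bool}
    (Inv : ℕ → ℕ → ℕ → ℕ → Bool → Prop) {r : Bool}
    (step_A : ∀ i j x y, Inv i j x y true → x < goal → y < goal →
      Inv (i + 1) j (if As i then x + 1 else x) (if As i then y else y + 1) (next true (As i)))
    (step_B : ∀ i j x y, Inv i j x y false → x < goal → y < goal →
      Inv i (j + 1) (if !Bs j then x + 1 else x) (if !Bs j then y else y + 1)
        (next false (!Bs j)))
    (win_A : ∀ i j x y srv, Inv i j x y srv → goal ≤ x → r = true)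
    (win_B : ∀ i j x y srv, Inv i j x y srv → x < goal → goal ≤ y → r = false)
    {fuel i j x y : ℕ} {srv : Bool} (h : Inv i j x y srv) (hxy : x + y < 2 * goal)
    (hfuel : 2 * goal ≤ fuel + x + y) :
    playWinner goal next As Bs fuel i j x y srv = r := by
  induction fuel generalizing i j x y srv with
  | zero => omega
  | succ fuel ih =>
    rw [playWinner]
    split_ifs with hx hy hsrv
    · exact (win_A _ _ _ _ _ h hx).symm
    · exact (win_B _ _ _ _ _ h (by omega) hy).symm
    · subst srv
      exact ih (step_A _ _ _ _ h (by omega) (by omega)) (by split_ifs <;> omega)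
        (by split_ifs <;> omega)
    · rw [Bool.not_eq_true] at hsrv
      subst srv
      exact ih (step_B _ _ _ _ h (by omega) (by omega)) (by split_ifs <;> omega)
        (by split_ifs <;> omega)

theorem playWinner_nextCR (k : ℕ) (As Bs : ℕ → Bool) :
    playWinner (k + 1) nextCR As Bs (2 * k + 2) 0 0 0 0 true =
      decide (losses As (k + 1) ≤ losses Bs k) := by
  refine playWinner_eq_of_invariant
    (fun i j x y srv => i ≤ k + 1 ∧ j ≤ k ∧ x + losses As i = i + losses Bs j ∧
      y + losses Bs j = losses As i + j ∧ x = bif srv then j else j + 1)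
    ?_ ?_ ?_ ?_ (by simp [losses]) (by omega) (by omega)
  · rintro i j x y ⟨hi, hj, hx, hy, hsrv⟩ hxk hyk
    rw [cond_true] at hsrv
    cases h : As i <;>
      simp only [nextCR, h, losses_succ, Bool.not_true, Bool.not_false, Bool.false_eq_true,
        ↓reduceIte, cond_true, cond_false] <;> omega
  · rintro i j x y ⟨hi, hj, hx, hy, hsrv⟩ hxk hyk
    rw [cond_false] at hsrv
    cases h : Bs j <;>
      simp only [nextCR, h, losses_succ, Bool.not_true, Bool.not_false, Bool.false_eq_true,
        ↓reduceIte, cond_true, cond_false] <;> omega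
  · rintro i j x y srv ⟨hi, hj, hx, hy, hsrv⟩ hxk
    cases srv with
    | false =>
      rw [cond_false] at hsrv
      obtain rfl : j = k := by omega
      have := losses_le_losses_add As hi
      rw [decide_eq_true_iff]
      omega
    | true => rw [cond_true] at hsrv; omega
  · rintro i j x y srv ⟨hi, hj, hx, hy, hsrv⟩ hxk hyk
    cases srv with
    | false => rw [cond_false] at hsrv; omega
    | true =>
      rw [cond_true] at hsrv
      obtain rfl : i = k + 1 := by omega
      have := losses_le_losses_add Bs hj
      rw [decide_eq_false_iff_not]
      omega

theorem playWinner_nextSR (k : ℕ) (As Bs : ℕ → Bool) :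
    playWinner (k + 1) nextSR As Bs (2 * k + 2) 0 0 0 0 true =
      decide (losses As (k + 1) ≤ losses Bs k) := by
  refine playWinner_eq_of_invariant
    (fun i j x y srv => i ≤ k + 1 ∧ j ≤ k ∧ x + losses As i = i + losses Bs j ∧
      y + losses Bs j = losses As i + j ∧ y = bif srv then j else j + 1)
    ?_ ?_ ?_ ?_ (by simp [losses]) (by omega) (by omega)
  · rintro i j x y ⟨hi, hj, hx, hy, hsrv⟩ hxk hyk
    rw [cond_true] at hsrv
    cases h : As i <;>
      simp only [nextSR, h, losses_succ, Bool.false_eq_true, ↓reduceIte, cond_true,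
        cond_false] <;> omega
  · rintro i j x y ⟨hi, hj, hx, hy, hsrv⟩ hxk hyk
    rw [cond_false] at hsrv
    cases h : Bs j <;>
      simp only [nextSR, h, losses_succ, Bool.not_true, Bool.not_false, Bool.false_eq_true,
        ↓reduceIte, cond_true, cond_false] <;> omega
  · rintro i j x y srv ⟨hi, hj, hx, hy, hsrv⟩ hxk
    cases srv with
    | false => rw [cond_false] at hsrv; omega
    | true =>
      rw [cond_true] at hsrv
      obtain rfl : i = k + 1 := by omega
      have := losses_mono Bs hj
      rw [decide_eq_true_iff]
      omega
  · rintro i j x y srv ⟨hi, hj, hx, hy, hsrv⟩ hxk hyk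
    cases srv with
    | false =>
      rw [cond_false] at hsrv
      obtain rfl : j = k := by omega
      have := losses_mono As hi
      rw [decide_eq_false_iff_not]
      omega
    | true => rw [cond_true] at hsrv; omega

/-- In a Best-of-(2k+1) game, for every fixed serving schedule, the winner under the
Catch-Up Rule (A serving first) is A if and only if `a ≤ b`, where `a` is the number
of losses among A's first `k+1` serves and `b` the number of losses among B's first
`k` serves.  Consequently, SR and CR produce the same winner on any schedule. -/
theorem CR_winner_iff (k : ℕ) (As Bs : ℕ → Bool) :
    ((playWinner (k + 1) nextCR As Bs (2 * k + 2) 0 0 0 0 true = true)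
        ↔ ((Finset.range (k + 1)).filter (fun i => As i = false)).card
            ≤ ((Finset.range k).filter (fun j => Bs j = false)).card) ∧
      playWinner (k + 1) nextCR As Bs (2 * k + 2) 0 0 0 0 true
        = playWinner (k + 1) nextSR As Bs (2 * k + 2) 0 0 0 0 true := by
  have hCR := playWinner_nextCR k As Bs
  refine ⟨?_, hCR.trans (playWinner_nextSR k As Bs).symm⟩
  rw [hCR, decide_eq_true_iff]
  simp only [losses, Nat.count_eq_card_filter_range]
end

section
/- For k \geq 1, the probability that A wins a Best-of-(2k+1) game under the Standard Rule (equivalently the Catch-Up Rule, or the Auxiliary Rule in which A serves k+1 times then B serves k times) equals \sum_{n=1}^{k+1} \sum_{m=0}^{n-1} \binom{k+1}{n} \binom{k}{m} p^n (1-p)^{k+1-n} q^m (1-q)^{k-m}. -/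
/-- Auxiliary Rule: all `2k+1` points are played, A serving the first `k+1` of them
and B the remaining `k`.  `t` is the number of points already played and `x` is A's
current score; returns the probability that A ends with at least `k+1` points. -/
def winProbAR (p q : ℝ) (k : ℕ) : ℕ → ℕ → ℕ → ℝ
  | 0, _, x => if k + 1 ≤ x then 1 else 0
  | fuel + 1, t, x =>
      (if t < k + 1 then p else 1 - q) * winProbAR p q k fuel (t + 1) (x + 1) +
        (1 - if t < k + 1 then p else 1 - q) * winProbAR p q k fuel (t + 1) x


/-!
Kingston's argument. Pad a game to `g` points with dummy points until all `2g - 1` points are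
played. Under the Standard Rule A serves the first point and the point after each of his wins,
B the point after each of hers, so before the game is decided A serves at most `g` and B at most
`g - 1` points; the dummy points can be served so that these counts become exactly `g` and
`g - 1`. As A wins the game iff he wins at least `g` of the `2g - 1` points, his winning
probability is `P(Bin(g, p) + Bin(g - 1, 1 - q) ≥ g)`, as under the Auxiliary Rule. Under the
Catch-Up Rule the same count works with the roles of A's and B's wins exchanged.
-/

open Finset

theorem sum_range_choose_mul_pow_succ {R : Type*} [CommSemiring R] (x y : R) (n : ℕ)
    (g : ℕ → R) :
    ∑ i ∈ range (n + 2), ((n + 1).choose i : R) * x ^ i * y ^ (n + 1 - i) * g i =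
      x * ∑ i ∈ range (n + 1), (n.choose i : R) * x ^ i * y ^ (n - i) * g (i + 1) +
        y * ∑ i ∈ range (n + 1), (n.choose i : R) * x ^ i * y ^ (n - i) * g i := by
  have pascal := sum_choose_succ_mul (fun i j => x ^ i * y ^ j * g i) n
  simp only [← mul_assoc] at pascal
  rw [pascal, add_comm, mul_sum, mul_sum]
  congr 1 <;> refine sum_congr rfl fun i hi => ?_
  · ring
  · rw [Nat.sub_add_comm (mem_range_succ_iff.mp hi)]
    ring

theorem sum_range_choose_mul_pow_one_sub_pow (x : ℝ) (n : ℕ) :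
    ∑ i ∈ range (n + 1), (n.choose i : ℝ) * x ^ i * (1 - x) ^ (n - i) = 1 := by
  simpa [mul_comm, mul_assoc, mul_left_comm] using (add_pow x (1 - x) n).symm

/-- The probability that A wins at least `c` of `a` points served by A and `b` points served
by B; `n` counts the points A wins on his serve and `m` those B wins on hers. -/
def tailProb (p q : ℝ) (a b c : ℕ) : ℝ :=
  ∑ n ∈ range (a + 1), (a.choose n : ℝ) * p ^ n * (1 - p) ^ (a - n) *
    ∑ m ∈ range (b + 1), (b.choose m : ℝ) * q ^ m * (1 - q) ^ (b - m) *
      if c + m ≤ n + b then 1 else 0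

section tailProb

variable (p q : ℝ)

theorem tailProb_succ_left (a b c : ℕ) :
    tailProb p q (a + 1) b (c + 1) =
      p * tailProb p q a b c + (1 - p) * tailProb p q a b (c + 1) := by
  have shift : ∀ n m, c + 1 + m ≤ n + 1 + b ↔ c + m ≤ n + b := by omega
  simp only [tailProb, sum_range_choose_mul_pow_succ, shift]

theorem tailProb_succ_mid (a b c : ℕ) :
    tailProb p q a (b + 1) (c + 1) =
      (1 - q) * tailProb p q a b c + q * tailProb p q a b (c + 1) := by
  have shift : ∀ n m, c + 1 + m ≤ n + (b + 1) ↔ c + m ≤ n + b := by omega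
  have shift' : ∀ n m, c + (m + 1) ≤ n + b ↔ c + 1 + m ≤ n + b := by omega
  simp only [tailProb]
  rw [mul_sum (range (a + 1)), mul_sum (range (a + 1)), ← sum_add_distrib]
  refine sum_congr rfl fun n _ => ?_
  simp only [sum_range_choose_mul_pow_succ, shift, shift']
  ring

theorem tailProb_zero_right (a b : ℕ) : tailProb p q a b 0 = 1 := by
  have hle : ∀ n, ∀ m ∈ range (b + 1), 0 + m ≤ n + b := fun n m hm => by
    simp at hm; omega
  simp +contextual only [tailProb, hle, if_true, mul_one, sum_range_choose_mul_pow_one_sub_pow]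

theorem tailProb_eq_zero_of_lt {a b c : ℕ} (h : a + b < c) : tailProb p q a b c = 0 := by
  refine sum_eq_zero fun n hn => mul_eq_zero_of_right _ (sum_eq_zero fun m hm => ?_)
  rw [if_neg (by simp at hn hm; omega), mul_zero]

theorem tailProb_succ_self_eq_sum (k : ℕ) :
    tailProb p q (k + 1) k (k + 1) = ∑ n ∈ Icc 1 (k + 1), ∑ m ∈ range n,
      ((k + 1).choose n : ℝ) * (k.choose m : ℝ) *
        p ^ n * (1 - p) ^ (k + 1 - n) * q ^ m * (1 - q) ^ (k - m) := by
  have hsub : Icc 1 (k + 1) ⊆ range (k + 2) := fun n hn => by simp at hn ⊢; omega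
  rw [tailProb, ← sum_subset hsub fun n hn₀ hn => ?_]
  · refine sum_congr rfl fun n hn => ?_
    have hwin : (range (k + 1)).filter (fun m => k + 1 + m ≤ n + k) = range n := by
      ext m; simp at hn ⊢; omega
    rw [← hwin, sum_filter, mul_sum]
    refine sum_congr rfl fun m _ => ?_
    split_ifs <;> ring
  · obtain rfl : n = 0 := by simp at hn₀ hn; omega
    exact mul_eq_zero_of_right _ (sum_eq_zero fun m _ => by rw [if_neg (by omega), mul_zero])

end tailProb

/-- In the padded game A still serves `g - x` points, less the one B is about to serve, and B
`g - y`, less the one A is about to serve. -/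
theorem winProb_nextSR_eq_tailProb (p q : ℝ) (g fuel x y : ℕ) (srv : Bool) (hx : x ≤ g)
    (hy : y ≤ g) (hxy : x + y < 2 * g) (hfuel : 2 * g ≤ x + y + fuel)
    (hsrv : srv = true → y < g) :
    winProb p q g nextSR fuel x y srv =
      tailProb p q (g - x - (!srv).toNat) (g - y - srv.toNat) (g - x) := by
  induction fuel generalizing x y srv with
  | zero => omega
  | succ fuel ih =>
    rw [winProb]
    by_cases hgx : g ≤ x
    · rw [if_pos hgx, Nat.sub_eq_zero_of_le hgx, tailProb_zero_right]
    rw [if_neg hgx]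
    by_cases hgy : g ≤ y
    · obtain rfl : srv = false := Bool.of_not_eq_true fun h => absurd (hsrv h) (by omega)
      rw [if_pos hgy, tailProb_eq_zero_of_lt p q (by simp; omega)]
    obtain ⟨a, ha⟩ : ∃ a, g - x = a + 1 := ⟨g - x - 1, by omega⟩
    obtain ⟨b, hb⟩ : ∃ b, g - y = b + 1 := ⟨g - y - 1, by omega⟩
    have hx' : g - (x + 1) = a := by omega
    have hy' : g - (y + 1) = b := by omega
    rw [if_neg hgy, nextSR, nextSR,
      ih (x + 1) y true (by omega) hy (by omega) (by omega) (fun _ => by omega),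
      ih x (y + 1) false hx (by omega) (by omega) (by omega) nofun]
    cases srv <;> simp [ha, hb, hx', hy', tailProb_succ_left, tailProb_succ_mid]

theorem winProb_nextCR_eq_tailProb (p q : ℝ) (g fuel x y : ℕ) (srv : Bool) (hx : x ≤ g)
    (hy : y ≤ g) (hxy : x + y < 2 * g) (hfuel : 2 * g ≤ x + y + fuel)
    (hsrv : srv = false → y < g) :
    winProb p q g nextCR fuel x y srv =
      tailProb p q (g - y - (!srv).toNat) (g - x - srv.toNat) (g - x) := by
  induction fuel generalizing x y srv with
  | zero => omega
  | succ fuel ih =>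
    rw [winProb]
    by_cases hgx : g ≤ x
    · rw [if_pos hgx, Nat.sub_eq_zero_of_le hgx, tailProb_zero_right]
    rw [if_neg hgx]
    by_cases hgy : g ≤ y
    · obtain rfl : srv = true := Bool.of_not_eq_false fun h => absurd (hsrv h) (by omega)
      rw [if_pos hgy, tailProb_eq_zero_of_lt p q (by simp; omega)]
    obtain ⟨a, ha⟩ : ∃ a, g - x = a + 1 := ⟨g - x - 1, by omega⟩
    obtain ⟨b, hb⟩ : ∃ b, g - y = b + 1 := ⟨g - y - 1, by omega⟩
    have hx' : g - (x + 1) = a := by omega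
    have hy' : g - (y + 1) = b := by omega
    rw [if_neg hgy, nextCR, nextCR, Bool.not_true, Bool.not_false,
      ih (x + 1) y false (by omega) hy (by omega) (by omega) (fun _ => by omega),
      ih x (y + 1) true hx (by omega) (by omega) (by omega) nofun]
    cases srv <;> simp [ha, hb, hx', hy', tailProb_succ_left, tailProb_succ_mid]

theorem winProbAR_eq_tailProb (p q : ℝ) (k fuel t x : ℕ) (hx : x ≤ t)
    (hfuel : k + 1 ≤ t + fuel) :
    winProbAR p q k fuel t x = tailProb p q (k + 1 - t) (fuel - (k + 1 - t)) (k + 1 - x) := by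
  induction fuel generalizing t x with
  | zero =>
    rw [winProbAR, Nat.sub_eq_zero_of_le (by omega : k + 1 ≤ t)]
    split_ifs with hkx
    · rw [Nat.sub_eq_zero_of_le hkx, tailProb_zero_right]
    · rw [tailProb_eq_zero_of_lt p q (by omega)]
  | succ fuel ih =>
    rw [winProbAR, ih (t + 1) (x + 1) (by omega) (by omega), ih (t + 1) x (by omega) (by omega)]
    split_ifs with ht
    · obtain ⟨a, ha⟩ : ∃ a, k + 1 - t = a + 1 := ⟨k - t, by omega⟩
      obtain ⟨c, hc⟩ : ∃ c, k + 1 - x = c + 1 := ⟨k - x, by omega⟩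
      rw [ha, hc, show k + 1 - (t + 1) = a by omega, show k + 1 - (x + 1) = c by omega,
        show fuel + 1 - (a + 1) = fuel - a by omega, tailProb_succ_left]
    · rw [Nat.sub_eq_zero_of_le (by omega : k + 1 ≤ t),
        Nat.sub_eq_zero_of_le (by omega : k + 1 ≤ t + 1), Nat.sub_zero, Nat.sub_zero,
        sub_sub_cancel]
      cases hc : k + 1 - x with
      | zero =>
        rw [Nat.sub_eq_zero_of_le (by omega : k + 1 ≤ x + 1)]
        simp only [tailProb_zero_right]
        ring
      | succ c => rw [show k + 1 - (x + 1) = c by omega, tailProb_succ_mid]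

theorem winProb_formula_general (k : ℕ) (p q : ℝ) :
    winProb p q (k + 1) nextSR (2 * k + 2) 0 0 true
        = ∑ n ∈ Finset.Icc 1 (k + 1), ∑ m ∈ Finset.range n,
            ((k + 1).choose n : ℝ) * (k.choose m : ℝ) *
              p ^ n * (1 - p) ^ (k + 1 - n) * q ^ m * (1 - q) ^ (k - m) ∧
      winProb p q (k + 1) nextCR (2 * k + 2) 0 0 true
        = winProb p q (k + 1) nextSR (2 * k + 2) 0 0 true ∧
      winProbAR p q k (2 * k + 1) 0 0
        = winProb p q (k + 1) nextSR (2 * k + 2) 0 0 true := by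
  have hSR :
      winProb p q (k + 1) nextSR (2 * k + 2) 0 0 true = tailProb p q (k + 1) k (k + 1) := by
    simpa using winProb_nextSR_eq_tailProb p q (k + 1) (2 * k + 2) 0 0 true
      (by omega) (by omega) (by omega) (by omega) (fun _ => by omega)
  have hCR :
      winProb p q (k + 1) nextCR (2 * k + 2) 0 0 true = tailProb p q (k + 1) k (k + 1) := by
    simpa using winProb_nextCR_eq_tailProb p q (k + 1) (2 * k + 2) 0 0 true
      (by omega) (by omega) (by omega) (by omega) nofun
  have hAR : winProbAR p q k (2 * k + 1) 0 0 = tailProb p q (k + 1) k (k + 1) := by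
    rw [winProbAR_eq_tailProb p q k (2 * k + 1) 0 0 le_rfl (by omega),
      Nat.sub_zero, show 2 * k + 1 - (k + 1) = k by omega]
  exact ⟨hSR.trans (tailProb_succ_self_eq_sum p q k), hCR.trans hSR.symm, hAR.trans hSR.symm⟩

/-- For `k ≥ 1`, the probability that A wins a Best-of-(2k+1) game under the Standard
Rule (equivalently the Catch-Up Rule, or the Auxiliary Rule in which A serves `k+1`
times then B serves `k` times) equals
`∑_{n=1}^{k+1} ∑_{m=0}^{n-1} C(k+1,n) C(k,m) pⁿ(1-p)^{k+1-n} qᵐ(1-q)^{k-m}`. -/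
theorem winProb_formula (k : ℕ) (hk : 1 ≤ k) (p q : ℝ)
    (hp0 : 0 < p) (hp1 : p < 1) (hq0 : 0 < q) (hq1 : q < 1) :
    winProb p q (k + 1) nextSR (2 * k + 2) 0 0 true
        = ∑ n ∈ Finset.Icc 1 (k + 1), ∑ m ∈ Finset.range n,
            ((k + 1).choose n : ℝ) * (k.choose m : ℝ) *
              p ^ n * (1 - p) ^ (k + 1 - n) * q ^ m * (1 - q) ^ (k - m) ∧
      winProb p q (k + 1) nextCR (2 * k + 2) 0 0 true
        = winProb p q (k + 1) nextSR (2 * k + 2) 0 0 true ∧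
      winProbAR p q k (2 * k + 1) 0 0
        = winProb p q (k + 1) nextSR (2 * k + 2) 0 0 true :=
  winProb_formula_general k p q
end

section
/- Under Trailing Rule a with p + q > 1, from a tied score x-x: W(A,x,x) > W(B,x,x) if and only if W(B,x+1,x) > W(A,x,x+1), since W(A,x,x) - W(B,x,x) = (p+q-1)[W(B,x+1,x) - W(A,x,x+1)]. -/
theorem mix_sub_mix {R : Type*} [CommRing R] (p q u v : R) :
    (p * u + (1 - p) * v) - ((1 - q) * u + q * v) = (p + q - 1) * (u - v) := by
  ring

theorem TRa_tie_lemma_general (p q : ℝ)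
    (hpq : p + q > 1)
    (W : Bool → ℕ → ℕ → ℝ) (x : ℕ)
    (hA : W true x x = p * W false (x + 1) x + (1 - p) * W true x (x + 1))
    (hB : W false x x = (1 - q) * W false (x + 1) x + q * W true x (x + 1)) :
    W true x x - W false x x
        = (p + q - 1) * (W false (x + 1) x - W true x (x + 1)) ∧
      (W true x x > W false x x ↔ W false (x + 1) x > W true x (x + 1)) := by
  have hdiff : W true x x - W false x x
      = (p + q - 1) * (W false (x + 1) x - W true x (x + 1)) := by
    rw [hA, hB, mix_sub_mix]
  refine ⟨hdiff, ?_⟩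
  rw [gt_iff_lt, gt_iff_lt, ← sub_pos, hdiff, mul_pos_iff_of_pos_left (sub_pos.mpr hpq),
    sub_pos]

/-- Under Trailing Rule a with `p + q > 1`: if `W C x y` denotes A's win probability
from the state where `C` serves (`true` = A) at score `x`–`y`, and from a tie
`W(A,x,x) = p·W(B,x+1,x) + (1-p)·W(A,x,x+1)` and
`W(B,x,x) = (1-q)·W(B,x+1,x) + q·W(A,x,x+1)`, then
`W(A,x,x) - W(B,x,x) = (p+q-1)·[W(B,x+1,x) - W(A,x,x+1)]`, and consequently
`W(A,x,x) > W(B,x,x)` if and only if `W(B,x+1,x) > W(A,x,x+1)`. -/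
theorem TRa_tie_lemma (p q : ℝ)
    (hp0 : 0 < p) (hp1 : p < 1) (hq0 : 0 < q) (hq1 : q < 1) (hpq : p + q > 1)
    (W : Bool → ℕ → ℕ → ℝ) (x : ℕ)
    (hA : W true x x = p * W false (x + 1) x + (1 - p) * W true x (x + 1))
    (hB : W false x x = (1 - q) * W false (x + 1) x + q * W true x (x + 1)) :
    W true x x - W false x x
        = (p + q - 1) * (W false (x + 1) x - W true x (x + 1)) ∧
      (W true x x > W false x x ↔ W false (x + 1) x > W true x (x + 1)) :=
  TRa_tie_lemma_general p q hpq W x hA hB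
end

section
/- In a Win-by-Two tiebreaker starting from a tie with A serving first, under the Catch-Up Rule with p = q and 0 \leq p < 1, the probability that A wins is 2p/(1+2p), the unique solution of P = p(1-p) + p^2 P + (1-p)p(1-P). In particular this probability is at most 2/3 and is increasing in p. -/
/-! Collecting the `P` terms, the recursion reads `(1 - p)(1 + 2p) P = 2p(1 - p)`, so for
`0 ≤ p < 1` it has the single solution `2p/(1+2p) = 1 - 1/(1+2p)`, which is increasing in `p`
and equals `2/3` at `p = 1`. -/

theorem catchUp_recursion_iff {p P : ℝ} (hp : p ≠ 1) (hp' : 1 + 2 * p ≠ 0) :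
    P = p * (1 - p) + p ^ 2 * P + p * (1 - p) * (1 - P) ↔ P = 2 * p / (1 + 2 * p) := by
  rw [eq_div_iff hp']
  constructor
  · intro h
    have factored : (1 - p) * (P * (1 + 2 * p) - 2 * p) = 0 := by linear_combination h
    linear_combination (mul_eq_zero.mp factored).resolve_left (sub_ne_zero.mpr hp.symm)
  · intro h
    linear_combination (1 - p) * h

theorem two_mul_div_one_add_two_mul_le_two_thirds {t : ℝ} (ht0 : 0 ≤ t) (ht1 : t ≤ 1) :
    2 * t / (1 + 2 * t) ≤ 2 / 3 := by
  rw [div_le_div_iff₀ (by linarith) (by norm_num)]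
  linarith

theorem strictMonoOn_two_mul_div_one_add_two_mul :
    StrictMonoOn (fun t : ℝ => 2 * t / (1 + 2 * t)) (Set.Ioi (-1 / 2)) := by
  intro x hx y hy hxy
  have hx : 0 < 1 + 2 * x := by linarith [Set.mem_Ioi.mp hx]
  have hy : 0 < 1 + 2 * y := by linarith [Set.mem_Ioi.mp hy]
  rw [div_lt_div_iff₀ hx hy]
  linarith

/-- In a Win-by-Two tiebreaker starting from a tie with A serving first, under the
Catch-Up Rule with both players winning on their own serve with probability `p`
(`0 ≤ p < 1`), A's win probability is `2p/(1+2p)`: it satisfies, and is the unique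
solution of, `P = p(1-p) + p²P + p(1-p)(1-P)`.  In particular this probability is
at most `2/3`, and it is (strictly) increasing in `p` on `[0,1)`. -/
theorem CR_tiebreaker (p : ℝ) (hp0 : 0 ≤ p) (hp1 : p < 1) :
    (2 * p / (1 + 2 * p)
        = p * (1 - p) + p ^ 2 * (2 * p / (1 + 2 * p))
          + p * (1 - p) * (1 - 2 * p / (1 + 2 * p))) ∧
      (∀ P : ℝ, P = p * (1 - p) + p ^ 2 * P + p * (1 - p) * (1 - P)
        → P = 2 * p / (1 + 2 * p)) ∧
      2 * p / (1 + 2 * p) ≤ 2 / 3 ∧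
      StrictMonoOn (fun t : ℝ => 2 * t / (1 + 2 * t)) (Set.Ico (0 : ℝ) 1) := by
  have recursion_iff := fun P : ℝ =>
    catchUp_recursion_iff (P := P) hp1.ne (by linarith : 1 + 2 * p ≠ 0)
  refine ⟨(recursion_iff _).mpr rfl, fun P => (recursion_iff P).mp,
    two_mul_div_one_add_two_mul_le_two_thirds hp0 hp1.le, ?_⟩
  exact strictMonoOn_two_mul_div_one_add_two_mul.mono fun t ht =>
    Set.mem_Ioi.mpr (by linarith [ht.1])
end

section
/- In a Win-by-Two tiebreaker with p = q, the expected length under the Standard Rule is 2/p (for 0 < p \leq 1) and under the Catch-Up Rule is 2/(1-p) (for 0 \leq p < 1); these are the solutions of E = 2[p^2 + (1-p)p] + [p(1-p) + (1-p)^2](E + 2) and E = 2[p(1-p) + (1-p)^2] + [p^2 + (1-p)p](E + 2) respectively. Hence EL_CR > EL_SR if and only if p > 1/2. -/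
/-!
Both renewal equations have the form `E = 2a + b(E + 2)` with `a + b = 1`, where `a` is the
probability that a block of two serves ends the tiebreaker; its unique solution is `E = 2 / a`,
the mean of two times a geometric variable. Under the Standard Rule `a = p`, under the Catch-Up
Rule `a = 1 - p`, and `2 / (1 - p) > 2 / p` exactly when `1 - p < p`.
-/

theorem renewal_eq_iff {K : Type*} [Field K] {a b E : K} (hab : a + b = 1) (ha : a ≠ 0) :
    E = 2 * a + b * (E + 2) ↔ E = 2 / a := by
  obtain rfl : b = 1 - a := eq_sub_of_add_eq' hab
  rw [eq_div_iff ha]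
  constructor <;> intro h <;> linear_combination h

/-- In a Win-by-Two tiebreaker (both players win on their own serve with probability
`p`), the expected length under the Standard Rule is `2/p` for `0 < p ≤ 1`: it is the
unique solution of `E = 2[p² + (1-p)p] + [p(1-p) + (1-p)²](E+2)`.  Under the Catch-Up
Rule it is `2/(1-p)` for `0 ≤ p < 1`: the unique solution of
`E = 2[p(1-p) + (1-p)²] + [p² + (1-p)p](E+2)`.  Hence for `0 < p < 1`,
`EL_CR > EL_SR` if and only if `p > 1/2`. -/
theorem tiebreaker_expected_lengths (p : ℝ) :
    (0 < p → p ≤ 1 →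
      2 / p = 2 * (p ^ 2 + (1 - p) * p) + (p * (1 - p) + (1 - p) ^ 2) * (2 / p + 2) ∧
      ∀ E : ℝ, E = 2 * (p ^ 2 + (1 - p) * p) + (p * (1 - p) + (1 - p) ^ 2) * (E + 2)
        → E = 2 / p) ∧
    (0 ≤ p → p < 1 →
      2 / (1 - p)
          = 2 * (p * (1 - p) + (1 - p) ^ 2) + (p ^ 2 + (1 - p) * p) * (2 / (1 - p) + 2) ∧
      ∀ E : ℝ, E = 2 * (p * (1 - p) + (1 - p) ^ 2) + (p ^ 2 + (1 - p) * p) * (E + 2)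
        → E = 2 / (1 - p)) ∧
    (0 < p → p < 1 → (2 / (1 - p) > 2 / p ↔ p > 1 / 2)) := by
  have hsum_p : p ^ 2 + (1 - p) * p = p := by ring
  have hsum_q : p * (1 - p) + (1 - p) ^ 2 = 1 - p := by ring
  rw [hsum_p, hsum_q]
  refine ⟨fun hp _ => ?_, fun _ hp => ?_, fun hp₀ hp₁ => ?_⟩
  · have key := fun E : ℝ => renewal_eq_iff (E := E) (add_sub_cancel p 1) hp.ne'
    exact ⟨(key _).mpr rfl, fun E => (key E).mp⟩
  · have key := fun E : ℝ =>
      renewal_eq_iff (E := E) (sub_add_cancel 1 p) (sub_ne_zero.mpr hp.ne')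
    exact ⟨(key _).mpr rfl, fun E => (key E).mp⟩
  · rw [gt_iff_lt, div_lt_div_iff_of_pos_left two_pos hp₀ (sub_pos.mpr hp₁)]
    constructor <;> intro h <;> linarith
end
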